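/- arXiv:2306.13414 — 4 statements merged into one kernel-verified Lean document; each statement's English description precedes it below -/
import Mathlib

section
/- Let K > N ≥ 1 be integers. Let R_c : [0,1) → ℝ be continuous, strictly decreasing and strictly positive, and let R_k : [0,1) → ℝ be continuous, strictly increasing with R_k(0) = 0. If (β*, t*) ∈ [0, 1/N) × [0, 1) maximizes the function (β, t) ↦ min( β·R_c(t) + R_k(t), ((1 − N·β)/(K − N))·R_c(t) ) over [0, 1/N) × [0, 1), then ((1 − N·β*)/(K − N))·R_c(t*) = β*·R_c(t*) + R_k(t*). -/
/-!
At a maximizer the two rates must agree, since otherwise one of them could be raised while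
the other stays above the old minimum. If the private-plus-common rate is the smaller one,
increase `β`. If the shared common rate is the smaller one, decrease `β` when `β* > 0`; when
`β* = 0` decrease `t` instead, which raises `R_c` and, by continuity, keeps `R_k` above the old
minimum. This needs `t* > 0`, which holds because `R_k(0) = 0` lies below the positive shared rate.
-/

open Set Filter Topology

theorem ContinuousWithinAt.le_of_forall_min_le {X : Type*} [TopologicalSpace X] {F G : X → ℝ}
    {s : Set X} {x : X} [(𝓝[s] x).NeBot] (hG : ContinuousWithinAt G s x)
    (hF : ∀ y ∈ s, F x < F y) (hmax : ∀ y ∈ s, min (F y) (G y) ≤ min (F x) (G x)) :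
    G x ≤ F x := by
  by_contra! hlt
  obtain ⟨y, hGy, hy⟩ :=
    ((hG.eventually (eventually_gt_nhds hlt)).and self_mem_nhdsWithin).exists
  have := hmax y hy
  rw [min_eq_left hlt.le] at this
  exact (lt_min (hF y hy) hGy).not_ge this

theorem stmt_0_general (K N : ℕ) (hKN : N < K)
    (Rc Rk : ℝ → ℝ)
    (hRc_anti : StrictAntiOn Rc (Set.Ico 0 1))
    (hRc_pos : ∀ t ∈ Set.Ico (0:ℝ) 1, 0 < Rc t)
    (hRk_cont : ContinuousOn Rk (Set.Ico 0 1))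
    (hRk0 : Rk 0 = 0)
    (βs ts : ℝ)
    (hβs : βs ∈ Set.Ico (0:ℝ) (1 / (N:ℝ))) (hts : ts ∈ Set.Ico (0:ℝ) 1)
    (hmax : ∀ β ∈ Set.Ico (0:ℝ) (1 / (N:ℝ)), ∀ t ∈ Set.Ico (0:ℝ) 1,
      min (β * Rc t + Rk t) ((1 - (N:ℝ) * β) / ((K:ℝ) - (N:ℝ)) * Rc t) ≤
        min (βs * Rc ts + Rk ts) ((1 - (N:ℝ) * βs) / ((K:ℝ) - (N:ℝ)) * Rc ts)) :
    (1 - (N:ℝ) * βs) / ((K:ℝ) - (N:ℝ)) * Rc ts = βs * Rc ts + Rk ts := by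
  have hN : (0:ℝ) < N := one_div_pos.1 (hβs.1.trans_lt hβs.2)
  have hd : (0:ℝ) < K - N := sub_pos.2 (by exact_mod_cast hKN)
  have ha : 0 < Rc ts := hRc_pos ts hts
  refine le_antisymm ?_ ?_
  · have := left_nhdsWithin_Ioo_neBot hβs.2
    refine
      (show Continuous fun β : ℝ => (1 - (N:ℝ) * β) / ((K:ℝ) - (N:ℝ)) * Rc ts by fun_prop)
      |>.continuousWithinAt.le_of_forall_min_le (s := Ioo βs (1 / N))
        (F := fun β => β * Rc ts + Rk ts) (fun β hβ => ?_)
        (fun β hβ => hmax β ⟨hβs.1.trans hβ.1.le, hβ.2⟩ ts hts)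
    have := hβ.1
    gcongr
  rcases hβs.1.eq_or_lt with rfl | hβs_pos
  · rcases hts.1.eq_or_lt with rfl | hts_pos
    · simp only [hRk0, zero_mul, mul_zero, sub_zero, add_zero]
      positivity
    have := right_nhdsWithin_Ioo_neBot hts_pos
    have hsub : Ioo 0 ts ⊆ Ico (0:ℝ) 1 := fun t ht => ⟨ht.1.le, ht.2.trans hts.2⟩
    have hRk : ContinuousWithinAt (fun t => 0 * Rc t + Rk t) (Ioo 0 ts) ts := by
      simpa using (hRk_cont ts hts).mono hsub
    refine hRk.le_of_forall_min_le (F := fun t => (1 - (N:ℝ) * 0) / ((K:ℝ) - (N:ℝ)) * Rc t)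
      (fun t ht => ?_) (fun t ht => by simpa only [min_comm] using hmax 0 hβs t (hsub ht))
    have := hRc_anti (hsub ht) hts ht.2
    simp only [mul_zero, sub_zero]
    gcongr
  · have := right_nhdsWithin_Ioo_neBot hβs_pos
    refine (show Continuous fun β : ℝ => β * Rc ts + Rk ts by fun_prop)
      |>.continuousWithinAt.le_of_forall_min_le (s := Ioo 0 βs)
        (F := fun β => (1 - (N:ℝ) * β) / ((K:ℝ) - (N:ℝ)) * Rc ts) (fun β hβ => ?_)
        fun β hβ => by
          simpa only [min_comm] using hmax β ⟨hβ.1.le, hβ.2.trans hβs.2⟩ ts hts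
    have := hβ.2
    gcongr

/-- Proposition 5: any maximizer of the max-min fair rate allocation problem for RSMA with
ZF precoding equalizes the two rate expressions. -/
theorem stmt_0 (K N : ℕ) (hN : 1 ≤ N) (hKN : N < K)
    (Rc Rk : ℝ → ℝ)
    (hRc_cont : ContinuousOn Rc (Set.Ico 0 1))
    (hRc_anti : StrictAntiOn Rc (Set.Ico 0 1))
    (hRc_pos : ∀ t ∈ Set.Ico (0:ℝ) 1, 0 < Rc t)
    (hRk_cont : ContinuousOn Rk (Set.Ico 0 1))
    (hRk_mono : StrictMonoOn Rk (Set.Ico 0 1))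
    (hRk0 : Rk 0 = 0)
    (βs ts : ℝ)
    (hβs : βs ∈ Set.Ico (0:ℝ) (1 / (N:ℝ))) (hts : ts ∈ Set.Ico (0:ℝ) 1)
    (hmax : ∀ β ∈ Set.Ico (0:ℝ) (1 / (N:ℝ)), ∀ t ∈ Set.Ico (0:ℝ) 1,
      min (β * Rc t + Rk t) ((1 - (N:ℝ) * β) / ((K:ℝ) - (N:ℝ)) * Rc t) ≤
        min (βs * Rc ts + Rk ts) ((1 - (N:ℝ) * βs) / ((K:ℝ) - (N:ℝ)) * Rc ts)) :
    (1 - (N:ℝ) * βs) / ((K:ℝ) - (N:ℝ)) * Rc ts = βs * Rc ts + Rk ts :=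
  stmt_0_general K N hKN Rc Rk hRc_anti hRc_pos hRk_cont hRk0 βs ts hβs hts hmax
end

section
/- Let N ≥ 1 and K be integers with K − N > 1, let ρ ∈ (0, 1] and σ > 0 satisfy ρσ > 1, and let β ∈ [0, 1/K]. Set D = 1 − Kβ + K − N and x = (ρσ)^{(K−N)/D}. Then (1 − ρ + x)·ln(1 − ρ + x) > x·ln(ρσ)·(1 − N·β)·(K − N)/D². -/
/-- Inequality (23) in Appendix C: the key inequality in the proof of Lemma 1. -/
theorem stmt_2 (K N : ℕ) (hN : 1 ≤ N) (hKN : 1 < (K:ℝ) - (N:ℝ))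
    (ρ σ : ℝ) (hρ : ρ ∈ Set.Ioc (0:ℝ) 1) (hσ : 0 < σ) (hρσ : 1 < ρ * σ)
    (β : ℝ) (hβ : β ∈ Set.Icc (0:ℝ) (1 / (K:ℝ)))
    (D x : ℝ) (hD : D = 1 - (K:ℝ) * β + (K:ℝ) - (N:ℝ))
    (hx : x = (ρ * σ) ^ (((K:ℝ) - (N:ℝ)) / D)) :
    (1 - ρ + x) * Real.log (1 - ρ + x) >
      x * Real.log (ρ * σ) * (1 - (N:ℝ) * β) * ((K:ℝ) - (N:ℝ)) / D ^ 2 := by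
  obtain ⟨hρ0, hρ1⟩ := hρ
  obtain ⟨hβ0, hβ1⟩ := hβ
  have hN1 : (1:ℝ) ≤ (N:ℝ) := by exact_mod_cast hN
  have hKpos : (0:ℝ) < (K:ℝ) := by linarith
  have hKβ : (K:ℝ) * β ≤ 1 := by
    have := mul_le_mul_of_nonneg_left hβ1 (le_of_lt hKpos)
    rw [mul_one_div, div_self (ne_of_gt hKpos)] at this
    exact this
  have hD1 : 1 < D := by nlinarith
  have hDpos : 0 < D := by linarith
  have hepos : 0 < ((K:ℝ) - (N:ℝ)) / D := by positivity
  have hρσpos : (0:ℝ) < ρ * σ := by positivity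
  have hx1 : 1 < x := by
    rw [hx, Real.one_lt_rpow_iff_of_pos hρσpos]
    exact Or.inl ⟨hρσ, hepos⟩
  have hlogx : Real.log x = (((K:ℝ) - (N:ℝ)) / D) * Real.log (ρ * σ) := by
    rw [hx, Real.log_rpow hρσpos]
  have hlogxpos : 0 < Real.log x := Real.log_pos hx1
  have hNβ : (N:ℝ) * β < 1 := by
    have : (N:ℝ) * β ≤ (N:ℝ) * (1 / K) := mul_le_mul_of_nonneg_left hβ1 (by linarith)
    have h2 : (N:ℝ) * (1 / K) < 1 := by
      rw [mul_one_div, div_lt_one hKpos]; linarith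
    linarith
  -- RHS = x * log x * ((1 - Nβ)/D)
  have hrhs : x * Real.log (ρ * σ) * (1 - (N:ℝ) * β) * ((K:ℝ) - (N:ℝ)) / D ^ 2
      = x * Real.log x * ((1 - (N:ℝ) * β) / D) := by
    rw [hlogx]; field_simp
  have hfrac : (1 - (N:ℝ) * β) / D < 1 := by
    rw [div_lt_one hDpos]
    nlinarith
  have hxp : 0 < x := by linarith
  have hxlogx : 0 < x * Real.log x := by positivity
  have hLHS : x * Real.log x ≤ (1 - ρ + x) * Real.log (1 - ρ + x) := by
    have h1 : x ≤ 1 - ρ + x := by linarith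
    have h2 : Real.log x ≤ Real.log (1 - ρ + x) :=
      Real.log_le_log (by linarith) h1
    calc x * Real.log x ≤ (1 - ρ + x) * Real.log x :=
          mul_le_mul_of_nonneg_right h1 (le_of_lt hlogxpos)
      _ ≤ (1 - ρ + x) * Real.log (1 - ρ + x) :=
          mul_le_mul_of_nonneg_left h2 (by linarith)
  have hRHS : x * Real.log x * ((1 - (N:ℝ) * β) / D) < x * Real.log x := by
    nlinarith
  rw [hrhs]
  linarith
end

section
/- Let (Ω, ℱ, μ) be a probability space, let c ≥ 0, and let X : Ω → ℝ be a random variable with X > 0 almost surely such that ln X and ln(1 + c·X) are integrable. Then 𝔼[ln(1 + c·X)] ≥ ln(1 + c·exp(𝔼[ln X])). -/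
open MeasureTheory

lemma aux_holder2 {p q a b : ℝ} (hp : 0 ≤ p) (hq : 0 ≤ q) (ha : 0 ≤ a) (hb : 0 ≤ b)
    (hab : a + b = 1) : 1 + p ^ a * q ^ b ≤ (1 + p) ^ a * (1 + q) ^ b := by
  have hS : (0:ℝ) < 1 + p := by linarith
  have hT : (0:ℝ) < 1 + q := by linarith
  have h1 : (p / (1 + p)) ^ a * (q / (1 + q)) ^ b ≤ a * (p / (1 + p)) + b * (q / (1 + q)) :=
    Real.geom_mean_le_arith_mean2_weighted ha hb (div_nonneg hp hS.le) (div_nonneg hq hT.le) hab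
  have h2 : (1 / (1 + p)) ^ a * (1 / (1 + q)) ^ b ≤ a * (1 / (1 + p)) + b * (1 / (1 + q)) :=
    Real.geom_mean_le_arith_mean2_weighted ha hb (by positivity) (by positivity) hab
  have hsum : (1 / (1 + p)) ^ a * (1 / (1 + q)) ^ b + (p / (1 + p)) ^ a * (q / (1 + q)) ^ b
      ≤ 1 := by
    have : a * (p / (1 + p)) + b * (q / (1 + q)) + (a * (1 / (1 + p)) + b * (1 / (1 + q))) = 1 := by
      field_simp
      linear_combination ((1 + p) * (1 + q)) * hab
    linarith
  have hSa : (0:ℝ) < (1 + p) ^ a := Real.rpow_pos_of_pos hS a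
  have hTb : (0:ℝ) < (1 + q) ^ b := Real.rpow_pos_of_pos hT b
  have key := mul_le_mul_of_nonneg_right hsum (by positivity : (0:ℝ) ≤ (1 + p) ^ a * (1 + q) ^ b)
  rw [one_mul] at key
  calc 1 + p ^ a * q ^ b
      = ((1 / (1 + p)) ^ a * (1 / (1 + q)) ^ b + (p / (1 + p)) ^ a * (q / (1 + q)) ^ b)
        * ((1 + p) ^ a * (1 + q) ^ b) := by
        rw [Real.div_rpow hp hS.le, Real.div_rpow hq hT.le,
          Real.div_rpow zero_le_one hS.le, Real.div_rpow zero_le_one hT.le,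
          Real.one_rpow, Real.one_rpow]
        field_simp
    _ ≤ (1 + p) ^ a * (1 + q) ^ b := key

lemma convexOn_log_one_add_exp {c : ℝ} (hc : 0 ≤ c) :
    ConvexOn ℝ Set.univ (fun u : ℝ => Real.log (1 + c * Real.exp u)) := by
  refine ⟨convex_univ, fun x _ y _ a b ha hb hab => ?_⟩
  simp only [smul_eq_mul]
  have hx : (0:ℝ) < 1 + c * Real.exp x := by positivity
  have hy : (0:ℝ) < 1 + c * Real.exp y := by positivity
  have harg : 1 + c * Real.exp (a * x + b * y)
      ≤ (1 + c * Real.exp x) ^ a * (1 + c * Real.exp y) ^ b := by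
    have h := aux_holder2 (mul_nonneg hc (Real.exp_pos x).le)
      (mul_nonneg hc (Real.exp_pos y).le) ha hb hab
    have heq : (c * Real.exp x) ^ a * (c * Real.exp y) ^ b = c * Real.exp (a * x + b * y) := by
      rw [Real.mul_rpow hc (Real.exp_pos x).le, Real.mul_rpow hc (Real.exp_pos y).le,
        ← Real.exp_mul, ← Real.exp_mul]
      have : c ^ a * Real.exp (x * a) * (c ^ b * Real.exp (y * b))
          = (c ^ a * c ^ b) * (Real.exp (x * a) * Real.exp (y * b)) := by ring
      rw [this, ← Real.rpow_add' hc (by rw [hab]; norm_num), hab, Real.rpow_one,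
        ← Real.exp_add]
      ring_nf
    rw [heq] at h
    linarith
  calc Real.log (1 + c * Real.exp (a * x + b * y))
      ≤ Real.log ((1 + c * Real.exp x) ^ a * (1 + c * Real.exp y) ^ b) :=
        Real.log_le_log (by positivity) harg
    _ = a * Real.log (1 + c * Real.exp x) + b * Real.log (1 + c * Real.exp y) := by
        rw [Real.log_mul (by positivity) (by positivity), Real.log_rpow hx, Real.log_rpow hy]

/-- Jensen-type lower bound on the ergodic rate: 𝔼[ln(1 + c·X)] ≥ ln(1 + c·exp 𝔼[ln X]). -/
theorem stmt_3 {Ω : Type*} [MeasurableSpace Ω] (μ : Measure Ω) [IsProbabilityMeasure μ]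
    (c : ℝ) (hc : 0 ≤ c) (X : Ω → ℝ)
    (hXpos : ∀ᵐ ω ∂μ, 0 < X ω)
    (hlogX : Integrable (fun ω => Real.log (X ω)) μ)
    (hlog1cX : Integrable (fun ω => Real.log (1 + c * X ω)) μ) :
    Real.log (1 + c * Real.exp (∫ ω, Real.log (X ω) ∂μ)) ≤
      ∫ ω, Real.log (1 + c * X ω) ∂μ := by
  set g : ℝ → ℝ := fun u => Real.log (1 + c * Real.exp u) with hg
  have hcont : ContinuousOn g Set.univ := by
    apply Continuous.continuousOn
    apply Continuous.log (by continuity)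
    intro u
    positivity
  have hae : ∀ᵐ ω ∂μ, g (Real.log (X ω)) = Real.log (1 + c * X ω) := by
    filter_upwards [hXpos] with ω hω
    simp [hg, Real.exp_log hω]
  have hgi : Integrable (g ∘ fun ω => Real.log (X ω)) μ :=
    hlog1cX.congr (by filter_upwards [hae] with ω h using h.symm)
  have h := (convexOn_log_one_add_exp hc).map_integral_le hcont isClosed_univ
    (Filter.Eventually.of_forall fun _ => Set.mem_univ _) hlogX hgi
  calc Real.log (1 + c * Real.exp (∫ ω, Real.log (X ω) ∂μ)) = g (∫ ω, Real.log (X ω) ∂μ) := rfl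
    _ ≤ ∫ ω, g (Real.log (X ω)) ∂μ := h
    _ = ∫ ω, Real.log (1 + c * X ω) ∂μ := integral_congr_ae hae
end

section
/- Let X be a random variable with the exponential distribution of rate 1 (density e^{−x} on (0, ∞)) and let c ≥ 0. Then 𝔼[log₂(1 + c·X)] ≥ log₂(1 + c·e^{−γ}), where γ is the Euler–Mascheroni constant. -/
/-! The map `t ↦ log (1 + c * exp t)` is convex, so Jensen's inequality applied to `log X` gives
`𝔼[log (1 + c X)] ≥ log (1 + c * exp 𝔼[log X])`, and `𝔼[log X] = Γ'(1) = -γ`. Concretely, the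
tangent line of this map at `t = -γ` bounds the integrand from below by a function whose integral
is computed from `∫ e^{-x} = 1` and `∫ e^{-x} log x = -γ`. -/

open Real MeasureTheory Set

theorem integral_exp_neg_mul_log :
    ∫ x in Ioi (0 : ℝ), exp (-x) * log x = -eulerMascheroniConstant := by
  have hGamma : Complex.Gamma =ᶠ[nhds 1] Complex.GammaIntegral := by
    filter_upwards [(isOpen_lt continuous_const Complex.continuous_re).mem_nhds
      (by norm_num : (0 : ℝ) < (1 : ℂ).re)] with s hs
    exact Complex.Gamma_eq_integral hs
  have h := (Complex.hasDerivAt_GammaIntegral (by norm_num)).unique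
    (Complex.hasDerivAt_Gamma_one.congr_of_eventuallyEq hGamma.symm)
  simp only [sub_self, Complex.cpow_zero, one_mul, ← Complex.ofReal_mul, mul_comm (log _)] at h
  exact_mod_cast h

-- A non-integrable function has Bochner integral `0`, whereas this one integrates to `-γ ≠ 0`.
theorem integrableOn_exp_neg_mul_log : IntegrableOn (fun x ↦ exp (-x) * log x) (Ioi 0) := by
  by_contra h
  have := integral_undef h
  rw [integral_exp_neg_mul_log] at this
  linarith [one_half_lt_eulerMascheroniConstant]

theorem log_add_mul_log_le_log_one_add_mul {b y : ℝ} (hb : 0 ≤ b) (hy : 0 < y) :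
    log (1 + b) + b / (1 + b) * log y ≤ log (1 + b * y) := by
  have hb1 : 0 < 1 + b := by positivity
  have hm0 : 0 ≤ b / (1 + b) := by positivity
  have hm1 : b / (1 + b) ≤ 1 := (div_le_one hb1).2 (by linarith)
  have hbern := rpow_one_add_le_one_add_mul_self (by linarith : -1 ≤ y - 1) hm0 hm1
  rw [add_sub_cancel] at hbern
  have hsplit : 1 + b * y = (1 + b) * (1 + b / (1 + b) * (y - 1)) := by
    field_simp; ring
  rw [hsplit, log_mul hb1.ne' ((rpow_pos_of_pos hy _).trans_le hbern).ne', ← log_rpow hy]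
  gcongr

theorem integrableOn_exp_neg_mul_log_one_add_mul {c : ℝ} (hc : 0 ≤ c) :
    IntegrableOn (fun x ↦ exp (-x) * log (1 + c * x)) (Ioi 0) := by
  have hmoment : IntegrableOn (fun x ↦ exp (-x) * x) (Ioi 0) := by
    simpa [one_add_one_eq_two.symm] using GammaIntegral_convergent two_pos
  refine (hmoment.const_mul c).mono' (by fun_prop) ?_
  filter_upwards [ae_restrict_mem measurableSet_Ioi] with x hx
  have hcx : 0 ≤ c * x := mul_nonneg hc (le_of_lt hx)
  rw [norm_of_nonneg (by have := log_nonneg (by linarith : (1:ℝ) ≤ 1 + c * x); positivity)]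
  calc exp (-x) * log (1 + c * x) ≤ exp (-x) * (c * x) := by
        gcongr; linarith [log_le_sub_one_of_pos (by linarith : (0:ℝ) < 1 + c * x)]
    _ = c * (exp (-x) * x) := by ring

theorem log_one_add_mul_exp_neg_eulerMascheroniConstant_le_integral {c : ℝ} (hc : 0 ≤ c) :
    log (1 + c * exp (-eulerMascheroniConstant)) ≤
      ∫ x in Ioi (0 : ℝ), exp (-x) * log (1 + c * x) := by
  set a := exp (-eulerMascheroniConstant)
  have ha : 0 < a := exp_pos _
  set b := c * a
  have hb : 0 ≤ b := by positivity
  set m := b / (1 + b)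
  have htangent : ∀ x ∈ Ioi (0 : ℝ),
      (log (1 + b) + m * eulerMascheroniConstant) * exp (-x) + m * (exp (-x) * log x) ≤
        exp (-x) * log (1 + c * x) := by
    intro x hx
    have hlog : log (x / a) = log x + eulerMascheroniConstant := by
      rw [log_div (ne_of_gt hx) ha.ne', log_exp, sub_neg_eq_add]
    have := log_add_mul_log_le_log_one_add_mul hb (div_pos hx ha)
    rw [hlog, show b * (x / a) = c * x by simp only [b]; field_simp] at this
    have := mul_le_mul_of_nonneg_left this (exp_pos (-x)).le
    linarith
  have hexp : IntegrableOn (fun x ↦ exp (-x)) (Ioi 0) := by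
    simpa using exp_neg_integrableOn_Ioi 0 one_pos
  have hlower := (hexp.const_mul (log (1 + b) + m * eulerMascheroniConstant)).add
    (integrableOn_exp_neg_mul_log.const_mul m)
  calc log (1 + b)
      = ∫ x in Ioi (0 : ℝ), (log (1 + b) + m * eulerMascheroniConstant) * exp (-x) +
          m * (exp (-x) * log x) := by
        rw [integral_add (hexp.const_mul _) (integrableOn_exp_neg_mul_log.const_mul _),
          integral_const_mul, integral_const_mul, integral_exp_neg_Ioi_zero,
          integral_exp_neg_mul_log]
        ring
    _ ≤ ∫ x in Ioi (0 : ℝ), exp (-x) * log (1 + c * x) :=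
        setIntegral_mono_on hlower (integrableOn_exp_neg_mul_log_one_add_mul hc)
          measurableSet_Ioi htangent

/-- Proposition 1: for X ~ Exponential(1) (density e^{−x} on (0,∞)) and c ≥ 0,
𝔼[log₂(1 + c·X)] ≥ log₂(1 + c·e^{−γ}). -/
theorem stmt_8 (c : ℝ) (hc : 0 ≤ c) :
    Real.logb 2 (1 + c * Real.exp (-Real.eulerMascheroniConstant)) ≤
      ∫ x in Set.Ioi (0:ℝ), Real.exp (-x) * Real.logb 2 (1 + c * x) := by
  simp_rw [logb, ← mul_div_assoc, integral_div]
  gcongr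
  exact log_one_add_mul_exp_neg_eulerMascheroniConstant_le_integral hc
end
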